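/- arXiv:1602.04436 — 4 statements merged into one kernel-verified Lean document; each statement's English description precedes it below -/
import Mathlib

section
/- Let L be a real symmetric N×N matrix with orthonormal eigenbasis φ_1, …, φ_N and corresponding real eigenvalues λ_1, …, λ_N. Let x ∈ ℂ^N and ψ, φ, c ∈ ℂ with |ψ·λ_n| < 1 for all n. Consider the ARMA₁ recursion y_{t+1} = ψ·L·y_t + φ·x, z_{t+1} = y_{t+1} + c·x with arbitrary y_0. Then z_t converges as t → ∞ to z = Σ_{n=1}^{N} (c + φ/(1 − ψλ_n)) · ⟨x, φ_n⟩ · φ_n. Equivalently, the ARMA₁ filter has graph frequency response H(λ) = c + r/(λ − p) at each eigenvalue λ = λ_n, where r = −φ/ψ and p = 1/ψ (for ψ ≠ 0). -/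
/-!
In the orthonormal eigenbasis `φ_n` the operator `L` acts diagonally, so the coordinate
`⟨φ_n, y_t⟩` obeys the scalar affine recursion `u_{t+1} = ψ λ_n u_t + φ ⟨φ_n, x⟩`. Since
`|ψ λ_n| < 1` this is a contraction, whose iterates converge to its fixed point
`φ ⟨φ_n, x⟩ / (1 - ψ λ_n)`; adding `c ⟨φ_n, x⟩` gives the coordinates of the limit of `z_t`.
-/

open Matrix Finset Filter Topology

theorem Module.Basis.repr_apply_of_apply_eq_smul {ι R M : Type*} [Fintype ι] [CommSemiring R]
    [AddCommMonoid M] [Module R M] (b : Module.Basis ι R M) {A : M →ₗ[R] M} {μ : ι → R}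
    (hA : ∀ i, A (b i) = μ i • b i) (v : M) (i : ι) :
    b.repr (A v) i = μ i * b.repr v i := by
  have hAv : A v = ∑ j, (μ j * b.repr v j) • b j := by
    conv_lhs => rw [← b.sum_repr v]
    simp only [map_sum, map_smul, hA, smul_smul, mul_comm]
  rw [hAv, b.repr_sum_self]

theorem Module.Basis.tendsto_of_tendsto_repr {α ι R M : Type*} [Fintype ι] [Semiring R]
    [TopologicalSpace R] [AddCommMonoid M] [Module R M] [TopologicalSpace M] [ContinuousAdd M]
    [ContinuousSMul R M] (b : Module.Basis ι R M) {f : α → M} {l : Filter α} {a : ι → R}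
    (h : ∀ i, Tendsto (fun t => b.repr (f t) i) l (𝓝 (a i))) :
    Tendsto f l (𝓝 (∑ i, a i • b i)) := by
  simpa only [b.sum_repr] using tendsto_finsetSum univ fun i _ => (h i).smul_const (b i)

theorem tendsto_of_affine_recurrence {𝕜 E : Type*} [NormedField 𝕜] [NormedAddCommGroup E]
    [NormedSpace 𝕜 E] {a : 𝕜} (ha : ‖a‖ < 1) {v : E} {u : ℕ → E}
    (hu : ∀ t, u (t + 1) = a • u t + v) :
    Tendsto u atTop (𝓝 ((1 - a)⁻¹ • v)) := by
  set s := (1 - a)⁻¹ • v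
  have hfix : a • s + v = s := by
    have hne : (1 : 𝕜) - a ≠ 0 := sub_ne_zero.mpr fun h => by simp [← h] at ha
    calc a • s + v = a • s + (1 - a) • s := by rw [smul_inv_smul₀ hne]
      _ = s := by rw [← add_smul, add_sub_cancel, one_smul]
  have herr : ∀ t, u t - s = a ^ t • (u 0 - s) := by
    intro t
    induction t with
    | zero => rw [pow_zero, one_smul]
    | succ t ih =>
      calc u (t + 1) - s = a • (u t - s) := by
            rw [hu, smul_sub]
            conv_lhs => rw [← hfix]
            abel
        _ = a ^ (t + 1) • (u 0 - s) := by rw [ih, smul_smul, pow_succ']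
  have hlim := ((tendsto_pow_atTop_nhds_zero_of_norm_lt_one ha).smul_const (u 0 - s)).add_const s
  rw [zero_smul, zero_add] at hlim
  exact hlim.congr fun t => by rw [← herr, sub_add_cancel]

theorem div_one_sub_mul_eq_div_sub_inv {K : Type*} [Field K] {ψ : K} (hψ : ψ ≠ 0) (φ μ : K) :
    φ / (1 - ψ * μ) = (-φ / ψ) / (μ - 1 / ψ) := by
  rw [show μ - 1 / ψ = -(1 - ψ * μ) / ψ by field_simp; ring, div_div_div_cancel_right₀ hψ,
    neg_div_neg_eq]

theorem arma1_frequency_response_general (N : ℕ) (L : Matrix (Fin N) (Fin N) ℝ)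
    (φv : Fin N → EuclideanSpace ℂ (Fin N)) (lam : Fin N → ℝ)
    (hON : Orthonormal ℂ φv)
    (heig : ∀ n, Matrix.toEuclideanLin (L.map Complex.ofReal) (φv n) =
      (lam n : ℂ) • φv n)
    (x : EuclideanSpace ℂ (Fin N)) (ψ φ c : ℂ)
    (hstab : ∀ n, ‖ψ * lam n‖ < 1)
    (y z : ℕ → EuclideanSpace ℂ (Fin N))
    (hy : ∀ t, y (t + 1) =
        ψ • Matrix.toEuclideanLin (L.map Complex.ofReal) (y t) + φ • x)
    (hz : ∀ t, z (t + 1) = y (t + 1) + c • x) :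
    Tendsto z atTop
      (nhds (∑ n, ((c + φ / (1 - ψ * lam n)) * (inner ℂ (φv n) x : ℂ)) • φv n)) ∧
    (ψ ≠ 0 → ∀ n, c + φ / (1 - ψ * lam n) =
      c + (-φ / ψ) / ((lam n : ℂ) - 1 / ψ)) := by
  have hsp : ⊤ ≤ Submodule.span ℂ (Set.range φv) :=
    (hON.linearIndependent.span_eq_top_of_card_eq_finrank' (by simp)).ge
  set b := (OrthonormalBasis.mk hON hsp).toBasis
  have hb : ⇑b = φv := by simp [b]
  have hrepr : ∀ v n, b.repr v n = inner ℂ (φv n) v := by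
    simp [b, OrthonormalBasis.repr_apply_apply]
  have hcoord : ∀ n, Tendsto (fun t => b.repr (z (t + 1)) n) atTop
      (𝓝 ((c + φ / (1 - ψ * lam n)) * inner ℂ (φv n) x)) := by
    intro n
    have hrec : ∀ t, b.repr (y (t + 1)) n = (ψ * lam n) • b.repr (y t) n + φ * b.repr x n := by
      intro t
      simp [hy, b.repr_apply_of_apply_eq_smul (hb ▸ heig), mul_assoc]
    have hlim := (tendsto_of_affine_recurrence (u := fun t => b.repr (y t) n) (hstab n) hrec
      |>.comp (tendsto_add_atTop_nat 1)).add_const (c * b.repr x n)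
    convert hlim using 2
    · simp [hz, hrepr, add_comm]
    · rw [hrepr, smul_eq_mul]; ring
  refine ⟨?_, fun hψ n => by rw [div_one_sub_mul_eq_div_sub_inv hψ]⟩
  rw [← tendsto_add_atTop_iff_nat 1]
  simpa only [hb] using b.tendsto_of_tendsto_repr hcoord

/-- **ARMA₁ graph frequency response.** Let `L` be real symmetric with orthonormal
eigenbasis `φv` and real eigenvalues `lam`, and suppose `|ψ λ_n| < 1` for all `n`.
Then the output `z_{t+1} = y_{t+1} + c x` of `y_{t+1} = ψ L y_t + φ x` converges to
`∑_n (c + φ/(1 - ψ λ_n)) ⟨x, φ_n⟩ φ_n`, and for `ψ ≠ 0` the response satisfies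
`c + φ/(1 - ψ λ) = c + r/(λ - p)` with `r = -φ/ψ` and `p = 1/ψ`. -/
theorem arma1_frequency_response (N : ℕ) (L : Matrix (Fin N) (Fin N) ℝ) (hL : L.IsSymm)
    (φv : Fin N → EuclideanSpace ℂ (Fin N)) (lam : Fin N → ℝ)
    (hON : Orthonormal ℂ φv)
    (heig : ∀ n, Matrix.toEuclideanLin (L.map Complex.ofReal) (φv n) =
      (lam n : ℂ) • φv n)
    (x : EuclideanSpace ℂ (Fin N)) (ψ φ c : ℂ)
    (hstab : ∀ n, ‖ψ * lam n‖ < 1)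
    (y z : ℕ → EuclideanSpace ℂ (Fin N))
    (hy : ∀ t, y (t + 1) =
        ψ • Matrix.toEuclideanLin (L.map Complex.ofReal) (y t) + φ • x)
    (hz : ∀ t, z (t + 1) = y (t + 1) + c • x) :
    Tendsto z atTop
      (nhds (∑ n, ((c + φ / (1 - ψ * lam n)) * (inner ℂ (φv n) x : ℂ)) • φv n)) ∧
    (ψ ≠ 0 → ∀ n, c + φ / (1 - ψ * lam n) =
      c + (-φ / ψ) / ((lam n : ℂ) - 1 / ψ)) :=
  arma1_frequency_response_general N L φv lam hON heig x ψ φ c hstab y z hy hz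
end

section
/- Let L be a real symmetric N×N matrix with orthonormal eigenbasis φ_1, …, φ_N and eigenvalues λ_1, …, λ_N, and let ‖L‖ ≤ ϱ. Let x ∈ ℂ^N, c ∈ ℂ, and for k = 1, …, K let ψ^{(k)}, φ^{(k)} ∈ ℂ with |ψ^{(k)}|·ϱ < 1. Consider the parallel ARMA_K filter given by K parallel recursions y^{(k)}_{t+1} = ψ^{(k)}·L·y^{(k)}_t + φ^{(k)}·x (with arbitrary initial vectors y^{(k)}_0) and output z_{t+1} = Σ_{k=1}^{K} y^{(k)}_{t+1} + c·x. Then z_t converges as t → ∞ to z = c·x + Σ_{k=1}^{K} φ^{(k)}·(I − ψ^{(k)}L)^{−1} x = Σ_{n=1}^{N} ( c + Σ_{k=1}^{K} r_k/(λ_n − p_k) ) · ⟨x, φ_n⟩ · φ_n, where r_k = −φ^{(k)}/ψ^{(k)} and p_k = 1/ψ^{(k)} (assuming ψ^{(k)} ≠ 0), irrespective of the initial conditions. -/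
/-!
Each branch is the affine recursion `y ↦ ψ A y + φ x` with `‖ψ A‖ ≤ |ψ| ϱ < 1`, so its error
against the fixed point `φ (1 - ψ A)⁻¹ x` shrinks geometrically, whatever the initial vector.
The limit operator `c + ∑ₖ φₖ (1 - ψₖ A)⁻¹` acts on the eigenvector `φₙ` as the scalar
`c + ∑ₖ φₖ / (1 - ψₖ λₙ) = c + ∑ₖ rₖ / (λₙ - pₖ)`, and expanding `x` in the orthonormal
eigenbasis gives the spectral formula.
-/

open Matrix Finset Filter Topology

theorem map_ringInverse {M₀ N₀ F : Type*} [MonoidWithZero M₀] [MonoidWithZero N₀]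
    [EquivLike F M₀ N₀] [MulEquivClass F M₀ N₀] (e : F) (x : M₀) :
    e (Ring.inverse x) = Ring.inverse (e x) := by
  by_cases hx : IsUnit x
  · obtain ⟨u, rfl⟩ := hx
    rw [show e u = Units.map (e : M₀ →* N₀) u from rfl, Ring.inverse_unit, Ring.inverse_unit,
      Units.coe_map_inv]
    rfl
  · rw [Ring.inverse_non_unit _ hx, Ring.inverse_non_unit _ (by rwa [isUnit_map_iff]), map_zero]

theorem Matrix.toEuclideanCLM_nonsing_inv {n 𝕜 : Type*} [Fintype n] [DecidableEq n] [RCLike 𝕜]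
    (M : Matrix n n 𝕜) :
    toEuclideanCLM (𝕜 := 𝕜) M⁻¹ = Ring.inverse (toEuclideanCLM (𝕜 := 𝕜) M) := by
  rw [nonsing_inv_eq_ringInverse, map_ringInverse]

section
variable {𝕜 E : Type*} [NontriviallyNormedField 𝕜]

theorem ContinuousLinearMap.ringInverse_apply_of_apply_eq_smul [SeminormedAddCommGroup E]
    [NormedSpace 𝕜 E] {u : E →L[𝕜] E} (hu : IsUnit u)
    {v : E} {a : 𝕜} (h : u v = a • v) : Ring.inverse u v = a⁻¹ • v := by
  have hv : v = a • Ring.inverse u v := by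
    rw [← map_smul, ← h, ← mul_apply_eq_comp, Ring.inverse_mul_cancel _ hu, one_apply_eq_self]
  rcases eq_or_ne a 0 with rfl | ha
  · rw [hv, zero_smul, map_zero, smul_zero]
  · rw [hv, smul_smul, inv_mul_cancel₀ ha, one_smul, ← hv]

theorem ContinuousLinearMap.ringInverse_one_sub_smul_apply [SeminormedAddCommGroup E]
    [NormedSpace 𝕜 E] {A : E →L[𝕜] E} {ψ : 𝕜} (hu : IsUnit (1 - ψ • A)) {v : E} {l : 𝕜}
    (h : A v = l • v) : Ring.inverse (1 - ψ • A) v = (1 - ψ * l)⁻¹ • v :=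
  ringInverse_apply_of_apply_eq_smul hu <| by
    rw [_root_.sub_apply, one_apply_eq_self, _root_.smul_apply, h, smul_smul, sub_smul, one_smul]

theorem tendsto_of_affine_recurrence_s4 [SeminormedAddCommGroup E] [NormedSpace 𝕜 E]
    {T : E →L[𝕜] E} (hT : ‖T‖ < 1) {b w : E}
    (hw : T w + b = w) {y : ℕ → E} (hy : ∀ t, y (t + 1) = T (y t) + b) :
    Tendsto y atTop (𝓝 w) := by
  have hbound : ∀ t, ‖y t - w‖ ≤ ‖T‖ ^ t * ‖y 0 - w‖ := by
    intro t
    induction t with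
    | zero => simp
    | succ t ih =>
      calc ‖y (t + 1) - w‖ = ‖T (y t) + b - (T w + b)‖ := by rw [hy, hw]
        _ = ‖T (y t - w)‖ := by rw [map_sub, add_sub_add_right_eq_sub]
        _ ≤ ‖T‖ * ‖y t - w‖ := T.le_opNorm _
        _ ≤ ‖T‖ * (‖T‖ ^ t * ‖y 0 - w‖) := by gcongr
        _ = ‖T‖ ^ (t + 1) * ‖y 0 - w‖ := by ring
  rw [tendsto_iff_norm_sub_tendsto_zero]
  refine squeeze_zero (fun t => norm_nonneg _) hbound ?_
  simpa using (tendsto_pow_atTop_nhds_zero_of_lt_one (norm_nonneg T) hT).mul_const ‖y 0 - w‖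

theorem tendsto_ringInverse_one_sub_of_recurrence [NormedAddCommGroup E] [NormedSpace 𝕜 E]
    [CompleteSpace E] {T : E →L[𝕜] E}
    (hT : ‖T‖ < 1) {b : E} {y : ℕ → E} (hy : ∀ t, y (t + 1) = T (y t) + b) :
    Tendsto y atTop (𝓝 (Ring.inverse (1 - T) b)) := by
  refine tendsto_of_affine_recurrence_s4 hT ?_ hy
  have h := congrArg (· b) (Ring.mul_inverse_cancel _ (isUnit_one_sub_of_norm_lt_one hT))
  simp only [mul_apply_eq_comp, _root_.sub_apply, one_apply_eq_self] at h
  exact (sub_eq_iff_eq_add'.mp h).symm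
end

theorem OrthonormalBasis.apply_eq_sum_of_apply_eq_smul {ι 𝕜 E F : Type*} [Fintype ι]
    [RCLike 𝕜] [NormedAddCommGroup E] [InnerProductSpace 𝕜 E]
    [FunLike F E E] [LinearMapClass F 𝕜 E E]
    (b : OrthonormalBasis ι 𝕜 E) (T : F) {μ : ι → 𝕜} (h : ∀ i, T (b i) = μ i • b i)
    (x : E) : T x = ∑ i, (μ i * inner 𝕜 (b i) x) • b i := by
  conv_lhs => rw [← b.sum_repr' x]
  simp only [map_sum, map_smul, h, smul_smul, mul_comm]

-- Both sides are `0` at the pole `ψ * l = 1`, by the convention `a / 0 = 0`.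
theorem neg_div_div_sub_one_div {K : Type*} [Field K] (r ψ l : K) (hψ : ψ ≠ 0) :
    (-r / ψ) / (l - 1 / ψ) = r * (1 - ψ * l)⁻¹ := by
  rw [show l - 1 / ψ = -(1 - ψ * l) / ψ by field_simp; ring, div_div_div_cancel_right₀ hψ,
    neg_div_neg_eq, div_eq_mul_inv]

theorem armaK_parallel_frequency_response_general (N K : ℕ)
    (L : Matrix (Fin N) (Fin N) ℝ)
    (φv : Fin N → EuclideanSpace ℂ (Fin N)) (lam : Fin N → ℝ)
    (hON : Orthonormal ℂ φv)
    (heig : ∀ n, Matrix.toEuclideanLin (L.map Complex.ofReal) (φv n) =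
      (lam n : ℂ) • φv n)
    (ϱ : ℝ)
    (hnorm : ‖Matrix.toEuclideanCLM (𝕜 := ℂ) (L.map Complex.ofReal)‖ ≤ ϱ)
    (x : EuclideanSpace ℂ (Fin N)) (c : ℂ) (ψf φf : Fin K → ℂ)
    (hψ : ∀ k, ψf k ≠ 0)
    (hstab : ∀ k, ‖ψf k‖ * ϱ < 1)
    (y : Fin K → ℕ → EuclideanSpace ℂ (Fin N)) (z : ℕ → EuclideanSpace ℂ (Fin N))
    (hy : ∀ k t, y k (t + 1) =
        ψf k • Matrix.toEuclideanLin (L.map Complex.ofReal) (y k t) + φf k • x)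
    (hz : ∀ t, z (t + 1) = ∑ k, y k (t + 1) + c • x) :
    Tendsto z atTop
      (nhds (c • x + ∑ k, φf k •
        Matrix.toEuclideanLin ((1 - ψf k • L.map Complex.ofReal)⁻¹) x)) ∧
    c • x + (∑ k, φf k •
        Matrix.toEuclideanLin ((1 - ψf k • L.map Complex.ofReal)⁻¹) x) =
      ∑ n, ((c + ∑ k, (-(φf k) / ψf k) / ((lam n : ℂ) - 1 / ψf k)) *
        (inner ℂ (φv n) x : ℂ)) • φv n := by
  set A := toEuclideanCLM (𝕜 := ℂ) (L.map Complex.ofReal)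
  have hT : ∀ k, ‖ψf k • A‖ < 1 := fun k =>
    calc ‖ψf k • A‖ ≤ ‖ψf k‖ * ‖A‖ := A.opNorm_smul_le (ψf k)
      _ ≤ ‖ψf k‖ * ϱ := by gcongr
      _ < 1 := hstab k
  have hR k : toEuclideanLin ((1 - ψf k • L.map Complex.ofReal)⁻¹) x =
      Ring.inverse (1 - ψf k • A) x := by
    rw [← coe_toEuclideanCLM_eq_toEuclideanLin, toEuclideanCLM_nonsing_inv, map_sub, map_one,
      map_smul]
    rfl
  simp only [hR]
  constructor
  · have hy' k t : y k (t + 1) = (ψf k • A) (y k t) + φf k • x := by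
      rw [hy]; rfl
    have hlim : Tendsto (fun t => z (t + 1)) atTop
        (𝓝 (∑ k, Ring.inverse (1 - ψf k • A) (φf k • x) + c • x)) := by
      simp only [hz]
      exact (tendsto_finsetSum _ fun k _ =>
        (tendsto_ringInverse_one_sub_of_recurrence (hT k) (hy' k)).comp
          (tendsto_add_atTop_nat 1)).add tendsto_const_nhds
    simpa [add_comm] using (tendsto_add_atTop_iff_nat 1).1 hlim
  · simp only [neg_div_div_sub_one_div _ _ _ (hψ _)]
    let H : EuclideanSpace ℂ (Fin N) →L[ℂ] EuclideanSpace ℂ (Fin N) :=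
      c • 1 + ∑ k, φf k • Ring.inverse (1 - ψf k • A)
    have hH n : H (φv n) = (c + ∑ k, φf k * (1 - ψf k * lam n)⁻¹) • φv n := by
      have hinv k := ContinuousLinearMap.ringInverse_one_sub_smul_apply
        (isUnit_one_sub_of_norm_lt_one (hT k)) (heig n)
      simp [H, hinv, add_smul, Finset.sum_smul, smul_smul]
    let b := OrthonormalBasis.mk hON
      (hON.linearIndependent.span_eq_top_of_card_eq_finrank' (by simp)).ge
    simpa [H, b] using b.apply_eq_sum_of_apply_eq_smul H (by simpa [b] using hH) x

/-- **Parallel ARMA_K frequency response.** For real symmetric `L` with orthonormal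
eigenbasis `φv`, eigenvalues `lam`, and spectral norm `≤ ϱ`, coefficients
`ψ⁽ᵏ⁾, φ⁽ᵏ⁾` with `|ψ⁽ᵏ⁾| ϱ < 1`, the output `z_{t+1} = ∑_k y⁽ᵏ⁾_{t+1} + c x` of the
parallel bank `y⁽ᵏ⁾_{t+1} = ψ⁽ᵏ⁾ L y⁽ᵏ⁾_t + φ⁽ᵏ⁾ x` converges, irrespective of the
initial conditions, to `c x + ∑_k φ⁽ᵏ⁾ (I - ψ⁽ᵏ⁾L)⁻¹ x
= ∑_n (c + ∑_k r_k/(λ_n - p_k)) ⟨x, φ_n⟩ φ_n` with `r_k = -φ⁽ᵏ⁾/ψ⁽ᵏ⁾, p_k = 1/ψ⁽ᵏ⁾`. -/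
theorem armaK_parallel_frequency_response (N K : ℕ)
    (L : Matrix (Fin N) (Fin N) ℝ) (hL : L.IsSymm)
    (φv : Fin N → EuclideanSpace ℂ (Fin N)) (lam : Fin N → ℝ)
    (hON : Orthonormal ℂ φv)
    (heig : ∀ n, Matrix.toEuclideanLin (L.map Complex.ofReal) (φv n) =
      (lam n : ℂ) • φv n)
    (ϱ : ℝ) (hϱ : 0 < ϱ)
    (hnorm : ‖Matrix.toEuclideanCLM (𝕜 := ℂ) (L.map Complex.ofReal)‖ ≤ ϱ)
    (x : EuclideanSpace ℂ (Fin N)) (c : ℂ) (ψf φf : Fin K → ℂ)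
    (hψ : ∀ k, ψf k ≠ 0)
    (hstab : ∀ k, ‖ψf k‖ * ϱ < 1)
    (y : Fin K → ℕ → EuclideanSpace ℂ (Fin N)) (z : ℕ → EuclideanSpace ℂ (Fin N))
    (hy : ∀ k t, y k (t + 1) =
        ψf k • Matrix.toEuclideanLin (L.map Complex.ofReal) (y k t) + φf k • x)
    (hz : ∀ t, z (t + 1) = ∑ k, y k (t + 1) + c • x) :
    Tendsto z atTop
      (nhds (c • x + ∑ k, φf k •
        Matrix.toEuclideanLin ((1 - ψf k • L.map Complex.ofReal)⁻¹) x)) ∧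
    c • x + (∑ k, φf k •
        Matrix.toEuclideanLin ((1 - ψf k • L.map Complex.ofReal)⁻¹) x) =
      ∑ n, ((c + ∑ k, (-(φf k) / ψf k) / ((lam n : ℂ) - 1 / ψf k)) *
        (inner ℂ (φv n) x : ℂ)) • φv n :=
  armaK_parallel_frequency_response_general N K L φv lam hON heig ϱ hnorm x c ψf φf hψ hstab y z hy
    hz
end

section
/- Let L be a real symmetric N×N matrix with orthonormal eigenbasis φ_1, …, φ_N and eigenvalues λ_1, …, λ_N. Let x ∈ ℂ^N, c ∈ ℂ and let θ_t, ψ_t, φ_t be complex coefficient sequences, periodic with period K. Consider the periodic ARMA_K recursion y_{t+1} = (θ_t·I + ψ_t·L)·y_t + φ_t·x with arbitrary y_0, and output z_{t+1} = y_{t+1} + c·x sampled at multiples of K. Suppose that for every eigenvalue λ_n the stability condition |∏_{k=0}^{K−1} (θ_k + ψ_k·λ_n)| < 1 holds. Then the subsampled outputs z_{iK} converge as i → ∞, irrespective of y_0, to Σ_{n=1}^{N} H(λ_n)·⟨x, φ_n⟩·φ_n, where H(λ) = c + [ Σ_{k=0}^{K−1} ( ∏_{τ=k+1}^{K−1} (θ_τ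 + ψ_τ·λ) )·φ_k ] / [ 1 − ∏_{k=0}^{K−1} (θ_k + ψ_k·λ) ]. -/
/-! In the orthonormal eigenbasis the filter decouples: the coordinate `a_n(t) = ⟨φ_n, y_t⟩`
satisfies the scalar recursion `a_n(t+1) = (θ_t + ψ_t λ_n) a_n(t) + φ_t ⟨φ_n, x⟩`, because `L` is
self-adjoint. Over one period this composes to an affine map `a ↦ P_n a + Q_n ⟨φ_n, x⟩` with
`P_n = ∏_k (θ_k + ψ_k λ_n)`, a contraction by the stability condition, so `a_n(iK)` converges to
its fixed point `Q_n ⟨φ_n, x⟩ / (1 - P_n)`. Expanding `z_{iK} = y_{iK} + c x` in the eigenbasis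
gives the limit. -/

open Matrix Finset Filter

open scoped Topology

section AffineRecurrence

variable {R : Type*} [CommSemiring R] {a μ u : ℕ → R}

theorem affine_recurrence_add (h : ∀ t, a (t + 1) = μ t * a t + u t) (t m : ℕ) :
    a (t + m) = (∏ j ∈ range m, μ (t + j)) * a t +
      ∑ j ∈ range m, (∏ τ ∈ Ico (j + 1) m, μ (t + τ)) * u (t + j) := by
  induction m with
  | zero => simp
  | succ m ih =>
    have hIco : ∀ j ∈ range m, (∏ τ ∈ Ico (j + 1) (m + 1), μ (t + τ)) * u (t + j) =
        (∏ τ ∈ Ico (j + 1) m, μ (t + τ)) * u (t + j) * μ (t + m) := fun j hj => by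
      rw [prod_Ico_succ_top (mem_range.mp hj)]
      ring
    rw [← add_assoc, h, ih, prod_range_succ, sum_range_succ, sum_congr rfl hIco, ← sum_mul,
      Ico_self, prod_empty]
    ring

theorem affine_recurrence_period_step (h : ∀ t, a (t + 1) = μ t * a t + u t) {K : ℕ}
    (hμ : Function.Periodic μ K) (hu : Function.Periodic u K) (i : ℕ) :
    a ((i + 1) * K) = (∏ k ∈ range K, μ k) * a (i * K) +
      ∑ k ∈ range K, (∏ τ ∈ Ico (k + 1) K, μ τ) * u k := by
  have hμi (j : ℕ) : μ (i * K + j) = μ j := by rw [add_comm]; exact hμ.nat_mul i j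
  have hui (j : ℕ) : u (i * K + j) = u j := by rw [add_comm]; exact hu.nat_mul i j
  simp only [add_one_mul i K, affine_recurrence_add h, hμi, hui]

end AffineRecurrence

theorem tendsto_div_one_sub_of_affine_recurrence {𝕜 : Type*} [NormedField 𝕜] {f : ℕ → 𝕜}
    {P C : 𝕜} (hP : ‖P‖ < 1) (hf : ∀ i, f (i + 1) = P * f i + C) :
    Tendsto f atTop (𝓝 (C / (1 - P))) := by
  have hP1 : 1 - P ≠ 0 := fun h => hP.ne (by rw [← sub_eq_zero.mp h, norm_one])
  set l := C / (1 - P)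
  have hl : l * (1 - P) = C := div_mul_cancel₀ C hP1
  have hdev (i : ℕ) : f i - l = P ^ i * (f 0 - l) := by
    induction i with
    | zero => simp
    | succ i ih =>
      rw [hf, pow_succ, mul_right_comm, ← ih]
      linear_combination -hl
  rw [← tendsto_sub_nhds_zero_iff, funext hdev, ← zero_mul (f 0 - l)]
  exact (tendsto_pow_atTop_nhds_zero_of_norm_lt_one hP).mul_const _

theorem tendsto_periodic_affine_recurrence {𝕜 : Type*} [NormedField 𝕜] {a μ u : ℕ → 𝕜}
    (h : ∀ t, a (t + 1) = μ t * a t + u t) {K : ℕ}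
    (hμ : Function.Periodic μ K) (hu : Function.Periodic u K)
    (hstab : ‖∏ k ∈ range K, μ k‖ < 1) :
    Tendsto (fun i => a (i * K)) atTop
      (𝓝 ((∑ k ∈ range K, (∏ τ ∈ Ico (k + 1) K, μ τ) * u k) / (1 - ∏ k ∈ range K, μ k))) :=
  tendsto_div_one_sub_of_affine_recurrence hstab (affine_recurrence_period_step h hμ hu)

theorem LinearMap.IsSymmetric.inner_apply_eq_of_apply_eq_smul {𝕜 E : Type*} [RCLike 𝕜]
    [NormedAddCommGroup E] [InnerProductSpace 𝕜 E] {T : E →ₗ[𝕜] E} (hT : T.IsSymmetric)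
    {v : E} {μ : 𝕜} (hv : T v = μ • v) (w : E) :
    inner 𝕜 v (T w) = starRingEnd 𝕜 μ * inner 𝕜 v w := by
  rw [← hT, hv, inner_smul_left]

theorem OrthonormalBasis.tendsto_of_tendsto_inner {ι 𝕜 E α : Type*} [Fintype ι] [RCLike 𝕜]
    [NormedAddCommGroup E] [InnerProductSpace 𝕜 E] (b : OrthonormalBasis ι 𝕜 E)
    {f : α → E} {l : Filter α} {c : ι → 𝕜}
    (h : ∀ i, Tendsto (fun s => inner 𝕜 (b i) (f s)) l (𝓝 (c i))) :
    Tendsto f l (𝓝 (∑ i, c i • b i)) :=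
  (tendsto_finsetSum _ fun i _ => (h i).smul_const (b i)).congr fun s => b.sum_repr' (f s)

/-- **Periodic ARMA_K frequency response.** Let `L` be real symmetric with orthonormal
eigenbasis `φv` and eigenvalues `lam`, and let `θ_t, ψ_t, φ_t` be `K`-periodic complex
coefficients. Consider `y_{t+1} = (θ_t I + ψ_t L) y_t + φ_t x`, `z_{t+1} = y_{t+1} + c x`.
If `|∏_{k<K} (θ_k + ψ_k λ_n)| < 1` for every `n`, then the subsampled outputs `z_{iK}`
converge, irrespective of `y_0`, to `∑_n H(λ_n) ⟨x, φ_n⟩ φ_n` with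
`H(λ) = c + (∑_{k<K} (∏_{τ=k+1}^{K-1} (θ_τ + ψ_τ λ)) φ_k) / (1 - ∏_{k<K} (θ_k + ψ_k λ))`. -/
theorem armaK_periodic_frequency_response (N K : ℕ) (hK : 0 < K)
    (L : Matrix (Fin N) (Fin N) ℝ) (hL : L.IsSymm)
    (φv : Fin N → EuclideanSpace ℂ (Fin N)) (lam : Fin N → ℝ)
    (hON : Orthonormal ℂ φv)
    (heig : ∀ n, Matrix.toEuclideanLin (L.map Complex.ofReal) (φv n) =
      (lam n : ℂ) • φv n)
    (x : EuclideanSpace ℂ (Fin N)) (c : ℂ) (θ ψ φc : ℕ → ℂ)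
    (hθ : ∀ t, θ (t + K) = θ t) (hψ : ∀ t, ψ (t + K) = ψ t)
    (hφ : ∀ t, φc (t + K) = φc t)
    (hstab : ∀ n, ‖∏ k ∈ Finset.range K, (θ k + ψ k * lam n)‖ < 1)
    (y z : ℕ → EuclideanSpace ℂ (Fin N))
    (hy : ∀ t, y (t + 1) = θ t • y t +
        ψ t • Matrix.toEuclideanLin (L.map Complex.ofReal) (y t) + φc t • x)
    (hz : ∀ t, z (t + 1) = y (t + 1) + c • x) :
    Tendsto (fun i => z (i * K)) atTop
      (nhds (∑ n,
        ((c + (∑ k ∈ Finset.range K,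
            (∏ τ ∈ Finset.Ico (k + 1) K, (θ τ + ψ τ * lam n)) * φc k) /
          (1 - ∏ k ∈ Finset.range K, (θ k + ψ k * lam n))) *
          (inner ℂ (φv n) x : ℂ)) • φv n)) := by
  have hsymm : (Matrix.toEuclideanLin (L.map Complex.ofReal)).IsSymmetric :=
    isSymmetric_toEuclideanLin_iff.mpr <|
      (isHermitian_iff_isSymm.mpr hL).map _ fun r => (Complex.conj_ofReal r).symm
  let B := OrthonormalBasis.mk hON
    (hON.linearIndependent.span_eq_top_of_card_eq_finrank' (by simp)).ge
  have hcoord (n : Fin N) (t : ℕ) : inner ℂ (φv n) (y (t + 1)) =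
      (θ t + ψ t * lam n) * inner ℂ (φv n) (y t) + φc t * inner ℂ (φv n) x := by
    simp only [hy, inner_add_right, inner_smul_right,
      hsymm.inner_apply_eq_of_apply_eq_smul (heig n), Complex.conj_ofReal]
    ring
  have hlim (n : Fin N) := tendsto_periodic_affine_recurrence
    (a := fun t => inner ℂ (φv n) (y t)) (u := fun t => φc t * inner ℂ (φv n) x) (hcoord n)
    (fun t => by simp only [hθ, hψ]) (fun t => by simp only [hφ]) (hstab n)
  have hzy : ∀ᶠ i in atTop, y (i * K) + c • x = z (i * K) := by
    filter_upwards [eventually_ge_atTop 1] with i hi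
    obtain ⟨m, hm⟩ : ∃ m, i * K = m + 1 := Nat.exists_eq_add_one.mpr (Nat.mul_pos hi hK)
    rw [hm, hz m]
  have hB : ⇑B = φv := OrthonormalBasis.coe_mk _ _
  refine Tendsto.congr' hzy ?_
  rw [← hB]
  refine B.tendsto_of_tendsto_inner fun n => ?_
  rw [hB]
  simp only [inner_add_right, inner_smul_right]
  convert (hlim n).add_const (c * inner ℂ (φv n) x) using 2
  simp only [← mul_assoc, ← sum_mul]
  ring
end

section
/- Let w > 0 and K ∈ {1, 2}, and for k = 1, …, K set γ_k = (2k+1)π/K and define the pole p_k = −1 + e^{iγ_k}/w^{1/K} ∈ ℂ (with w^{1/K} the positive real K-th root of w). Then |p_k| > 1 for every k; equivalently, the stability condition 2·cos(γ_k)·w^{1/K} < 1 holds for all k, so the Tikhonov-denoising ARMA_K graph filter on the shifted normalized Laplacian (whose spectral radius bound is ϱ = 1) is stable for every regularization weight w > 0 when K = 1 or K = 2. -/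
/-!
Since `|e^{iγ}| = 1`, expanding the square gives
`r² ‖-1 + e^{iγ}/r‖² = r² - 2 r cos γ + 1`, so `‖p‖ > 1` is exactly the stability condition
`2 cos γ · r < 1`. For `K = 1` the angle `3π` has cosine `-1` and for `K = 2` the angles
`3π/2, 5π/2` are odd multiples of `π/2` with cosine `0`; in both cases `2 cos γ · r ≤ 0 < 1`.
-/

open Complex in
theorem norm_neg_one_add_exp_mul_I_div_sq (γ : ℝ) {r : ℝ} (hr : r ≠ 0) :
    ‖-1 + exp (I * γ) / r‖ ^ 2 = 1 + (1 - 2 * Real.cos γ * r) / r ^ 2 := by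
  have hz : -1 + exp (I * γ) / r =
      ((Real.cos γ / r - 1 : ℝ) : ℂ) + ((Real.sin γ / r : ℝ) : ℂ) * I := by
    rw [mul_comm, exp_mul_I, ← ofReal_cos, ← ofReal_sin]
    push_cast
    ring
  rw [hz, Complex.sq_norm, normSq_add_mul_I]
  field_simp
  nlinarith [Real.sin_sq_add_cos_sq γ]

theorem one_lt_norm_neg_one_add_exp_mul_I_div_iff (γ : ℝ) {r : ℝ} (hr : 0 < r) :
    1 < ‖-1 + Complex.exp (Complex.I * γ) / r‖ ↔ 2 * Real.cos γ * r < 1 := by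
  rw [← one_lt_sq_iff₀ (norm_nonneg _), norm_neg_one_add_exp_mul_I_div_sq γ hr.ne',
    lt_add_iff_pos_right, div_pos_iff_of_pos_right (by positivity), sub_pos]

theorem Real.cos_odd_mul_pi (k : ℕ) : Real.cos ((2 * k + 1) * Real.pi) = -1 := by
  rw [← Real.cos_nat_mul_two_pi_add_pi k]
  ring_nf

theorem Real.cos_odd_mul_pi_div_two (k : ℕ) : Real.cos ((2 * k + 1) * Real.pi / 2) = 0 :=
  Real.cos_eq_zero_iff.2 ⟨k, by push_cast; ring⟩

/-- **Stability of Tikhonov-denoising ARMA_K on the shifted normalized Laplacian.**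
For `w > 0` and `K ∈ {1, 2}`, the poles `p_k = -1 + e^{iγ_k}/w^{1/K}` with
`γ_k = (2k+1)π/K` satisfy `|p_k| > 1` for all `k = 1, …, K`; equivalently the
stability condition `2 cos(γ_k) w^{1/K} < 1` holds, so the filter is stable on the
shifted normalized Laplacian (spectral radius bound `ϱ = 1`) for every `w > 0`. -/
theorem tikhonov_armaK_stable (w : ℝ) (hw : 0 < w) (K : ℕ) (hK : K = 1 ∨ K = 2) :
    ∀ k : ℕ, 1 ≤ k → k ≤ K →
      1 < ‖-1 +
          Complex.exp (Complex.I * (((2 * k + 1) * Real.pi / K : ℝ) : ℂ)) /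
            ((w ^ (1 / (K : ℝ)) : ℝ) : ℂ)‖ ∧
      2 * Real.cos ((2 * k + 1) * Real.pi / K) * w ^ (1 / (K : ℝ)) < 1 := by
  intro k _ _
  have hcos : Real.cos ((2 * k + 1) * Real.pi / K) ≤ 0 := by
    rcases hK with rfl | rfl
    · simp [Real.cos_odd_mul_pi]
    · simp [Real.cos_odd_mul_pi_div_two]
  have hr : 0 < w ^ (1 / (K : ℝ)) := Real.rpow_pos_of_pos hw _
  have hstable : 2 * Real.cos ((2 * k + 1) * Real.pi / K) * w ^ (1 / (K : ℝ)) < 1 := by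
    nlinarith
  exact ⟨(one_lt_norm_neg_one_add_exp_mul_I_div_iff _ hr).2 hstable, hstable⟩
end
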